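/- (Two-sided bound in the double-loop Peng's Q(λ) analysis.) Fix λ ∈ [0,1]. Let (Q_k)_{k≥0}, (μ_k)_{k≥0}, (δ_k)_{k≥0}, (ε_k)_{k≥0} be such that: each δ_k : X → ℝ is nonnegative; each μ_k is δ_k-greedy with respect to Q_k, i.e. (μ_k Q_k)(x) ≥ max_a Q_k x a − δ_k(x) for all x; and for each k, Q_{k+1} − ε_k is the unique fixed point of λ T^{μ_k} + (1−λ) T. Then for every k ≥ 0, Q^{μ_k} − ‖ε_k‖∞·𝟙 ≤ Q_{k+1} ≤ Q^{μ_{k+1}} + ((1+γ)/(1−γ))·‖ε_k‖∞·𝟙 + (γ/(1−γ))·‖δ_{k+1}‖∞·𝟙 pointwise. -/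

import Mathlib

open scoped BigOperators

namespace RLPQL

variable {X A : Type*} [Fintype X] [Fintype A]

/-- `P` is a transition kernel: nonnegative and rows sum to one. -/
def IsKernel (P : X → A → X → ℝ) : Prop :=
  (∀ x a y, 0 ≤ P x a y) ∧ ∀ x a, ∑ y, P x a y = 1

/-- `π` is a (Markov) policy: nonnegative and sums to one over actions. -/
def IsPolicy (π : X → A → ℝ) : Prop :=
  (∀ x a, 0 ≤ π x a) ∧ ∀ x, ∑ a, π x a = 1

/-- `(πQ)(x) = ∑_a π x a * Q x a`. -/
def polQ (π Q : X → A → ℝ) : X → ℝ := fun x => ∑ a, π x a * Q x a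

/-- `(PV)(x,a) = ∑_y P x a y * V y`. -/
def PV (P : X → A → X → ℝ) (V : X → ℝ) : X → A → ℝ := fun x a => ∑ y, P x a y * V y

/-- `P^π Q = P (π Q)`. -/
def Ppol (P : X → A → X → ℝ) (π Q : X → A → ℝ) : X → A → ℝ := PV P (polQ π Q)

/-- Bellman operator `T^π Q = r + γ P^π Q`. -/
def bellman (P : X → A → X → ℝ) (r : X → A → ℝ) (γ : ℝ) (π Q : X → A → ℝ) : X → A → ℝ :=
  fun x a => r x a + γ * Ppol P π Q x a

/-- Bellman optimality operator `(T Q)(x,a) = r x a + γ ∑_y P x a y * max_b Q y b`. -/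
noncomputable def optBellman (P : X → A → X → ℝ) (r : X → A → ℝ) (γ : ℝ) (Q : X → A → ℝ) :
    X → A → ℝ :=
  fun x a => r x a + γ * ∑ y, P x a y * (⨆ b, Q y b)

/-- `π` is greedy with respect to `Q`. -/
def IsGreedy (π Q : X → A → ℝ) : Prop := ∀ x, polQ π Q x = ⨆ a, Q x a

/-- `(I - c P^μ)⁻¹ f = ∑_{t=0}^∞ c^t (P^μ)^t f`. -/
noncomputable def resolvent (P : X → A → X → ℝ) (c : ℝ) (μ : X → A → ℝ) (f : X → A → ℝ) :
    X → A → ℝ :=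
  fun x a => ∑' t : ℕ, c ^ t * ((Ppol P μ)^[t] f) x a

/-- Peng's Q(λ) operator `N_λ^{μ,π} Q = (I - γλ P^μ)⁻¹ (r + γ(1-λ) P^π Q)`. -/
noncomputable def peng (P : X → A → X → ℝ) (r : X → A → ℝ) (γ lam : ℝ) (μ π Q : X → A → ℝ) :
    X → A → ℝ :=
  resolvent P (γ * lam) μ (fun x a => r x a + γ * (1 - lam) * Ppol P π Q x a)

/-- The mixture policy `c·μ + (1-c)·π`. -/
def mixP (c : ℝ) (μ π : X → A → ℝ) : X → A → ℝ := fun x a => c * μ x a + (1 - c) * π x a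

end RLPQL

open RLPQL

/-! Write `B = Q_{k+1} - ε_k`. Since `T^μ ≤ T`, the fixed-point equation
`B = λ T^{μ_k} B + (1 - λ) T B` puts `B` between `T^{μ_k} B` and `T B`. Both `T^π` and `T` are
monotone and move constants by the factor `γ`, so looking at the largest value of `U - V` gives a
comparison principle: `U ≤ T^π U + c` and `T^π V ≤ V + c'` imply `U ≤ V + (c + c') / (1 - γ)`.
With `T^{μ_k} B ≤ B` it yields `Q^{μ_k} ≤ B`. With `B ≤ T B` and the `δ_{k+1}`-greediness of
`μ_{k+1}` it yields `Q_{k+1} ≤ T^{μ_{k+1}} Q_{k+1} + (1 + γ) ‖ε_k‖ + γ ‖δ_{k+1}‖`, and the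
comparison principle once more gives the upper bound. -/

theorem le_add_div_of_le_map_add_of_map_le_add {X A : Type*} [Finite X] [Finite A]
    [Nonempty X] [Nonempty A] {T : (X → A → ℝ) → X → A → ℝ} {γ : ℝ} (hγ : γ < 1)
    (hT : Monotone T) (hshift : ∀ V c, T (fun x a => V x a + c) = fun x a => T V x a + γ * c)
    {U V : X → A → ℝ} {c c' : ℝ} (hU : ∀ x a, U x a ≤ T U x a + c)
    (hV : ∀ x a, T V x a ≤ V x a + c') :
    ∀ x a, U x a ≤ V x a + (c + c') / (1 - γ) := by
  obtain ⟨p, hp⟩ := Finite.exists_max fun p : X × A => U p.1 p.2 - V p.1 p.2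
  set m := U p.1 p.2 - V p.1 p.2
  have hUV : ∀ x a, U x a ≤ V x a + m := fun x a => by linarith [hp (x, a)]
  have hm : m ≤ γ * m + c + c' := by
    have hTUV := hT (show U ≤ fun x a => V x a + m from hUV) p.1 p.2
    rw [hshift] at hTUV
    linarith [hU p.1 p.2, hV p.1 p.2]
  have hm' : m ≤ (c + c') / (1 - γ) := by
    rw [le_div_iff₀ (sub_pos.2 hγ)]
    linarith
  intro x a
  linarith [hUV x a]

namespace RLPQL

variable {X A : Type*}

theorem abs_apply_le_norm [Fintype X] [Fintype A] (f : X → A → ℝ) (x : X) (a : A) :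
    |f x a| ≤ ‖f‖ :=
  (norm_le_pi_norm (f x) a).trans (norm_le_pi_norm f x)

section Kernel

variable [Fintype X] {P : X → A → X → ℝ}

theorem IsKernel.sum_mul_add (hP : IsKernel P) (V : X → ℝ) (c : ℝ) (x : X) (a : A) :
    ∑ y, P x a y * (V y + c) = ∑ y, P x a y * V y + c := by
  simp only [mul_add, Finset.sum_add_distrib, ← Finset.sum_mul, hP.2 x a, one_mul]

theorem IsKernel.sum_mul_mono (hP : IsKernel P) {V W : X → ℝ} (h : V ≤ W) (x : X) (a : A) :
    ∑ y, P x a y * V y ≤ ∑ y, P x a y * W y :=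
  Finset.sum_le_sum fun y _ => mul_le_mul_of_nonneg_left (h y) (hP.1 x a y)

end Kernel

section Policy

variable [Fintype A] {π : X → A → ℝ}

theorem IsPolicy.polQ_add (hπ : IsPolicy π) (Q : X → A → ℝ) (c : ℝ) (x : X) :
    polQ π (fun x a => Q x a + c) x = polQ π Q x + c := by
  simp only [polQ, mul_add, Finset.sum_add_distrib, ← Finset.sum_mul, hπ.2 x, one_mul]

theorem IsPolicy.polQ_mono (hπ : IsPolicy π) {Q Q' : X → A → ℝ} (h : Q ≤ Q') (x : X) :
    polQ π Q x ≤ polQ π Q' x :=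
  Finset.sum_le_sum fun a _ => mul_le_mul_of_nonneg_left (h x a) (hπ.1 x a)

theorem IsPolicy.polQ_le_iSup (hπ : IsPolicy π) (Q : X → A → ℝ) (x : X) :
    polQ π Q x ≤ ⨆ a, Q x a := by
  calc polQ π Q x ≤ ∑ a, π x a * ⨆ b, Q x b :=
        Finset.sum_le_sum fun a _ =>
          mul_le_mul_of_nonneg_left (le_ciSup (Finite.bddAbove_range _) a) (hπ.1 x a)
    _ = ⨆ b, Q x b := by rw [← Finset.sum_mul, hπ.2 x, one_mul]

end Policy

section Bellman

variable [Fintype X] [Fintype A] {P : X → A → X → ℝ} (r : X → A → ℝ) {γ : ℝ}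

theorem bellman_mono (hP : IsKernel P) (hγ : 0 ≤ γ) {π : X → A → ℝ} (hπ : IsPolicy π) :
    Monotone (bellman P r γ π) := fun _ _ h x a =>
  add_le_add_right (mul_le_mul_of_nonneg_left (hP.sum_mul_mono (hπ.polQ_mono h) x a) hγ) _

theorem bellman_add_const (hP : IsKernel P) {π : X → A → ℝ} (hπ : IsPolicy π)
    (Q : X → A → ℝ) (c : ℝ) :
    bellman P r γ π (fun x a => Q x a + c) = fun x a => bellman P r γ π Q x a + γ * c := by
  ext x a
  simp only [bellman, Ppol, PV, hπ.polQ_add, hP.sum_mul_add]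
  ring

theorem optBellman_mono (hP : IsKernel P) (hγ : 0 ≤ γ) : Monotone (optBellman P r γ) :=
  fun _ _ h x a => add_le_add_right (mul_le_mul_of_nonneg_left (hP.sum_mul_mono (fun y =>
    ciSup_mono (Finite.bddAbove_range _) (h y)) x a) hγ) _

theorem optBellman_add_const [Nonempty A] (hP : IsKernel P) (Q : X → A → ℝ) (c : ℝ) :
    optBellman P r γ (fun x a => Q x a + c) = fun x a => optBellman P r γ Q x a + γ * c := by
  ext x a
  simp only [optBellman, ← ciSup_add (Finite.bddAbove_range _), hP.sum_mul_add]
  ring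

theorem bellman_le_optBellman (hP : IsKernel P) (hγ : 0 ≤ γ) {π : X → A → ℝ} (hπ : IsPolicy π)
    (Q : X → A → ℝ) : bellman P r γ π Q ≤ optBellman P r γ Q := fun x a =>
  add_le_add_right (mul_le_mul_of_nonneg_left (hP.sum_mul_mono (hπ.polQ_le_iSup Q) x a) hγ) _

theorem optBellman_le_bellman_add (hP : IsKernel P) (hγ : 0 ≤ γ) {μ Q : X → A → ℝ} {d : ℝ}
    (hμ : ∀ y, (⨆ b, Q y b) ≤ polQ μ Q y + d) (x : X) (a : A) :
    optBellman P r γ Q x a ≤ bellman P r γ μ Q x a + γ * d := by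
  have h := mul_le_mul_of_nonneg_left (hP.sum_mul_mono hμ x a) hγ
  rw [hP.sum_mul_add] at h
  simp only [optBellman, bellman, Ppol, PV]
  linarith

theorem bellman_le_and_le_optBellman_of_mix_fixed (hP : IsKernel P) (hγ : 0 ≤ γ)
    {μ : X → A → ℝ} (hμ : IsPolicy μ) {lam : ℝ} (hlam0 : 0 ≤ lam) (hlam1 : lam ≤ 1)
    {B : X → A → ℝ}
    (hB : (fun x a => lam * bellman P r γ μ B x a + (1 - lam) * optBellman P r γ B x a) = B)
    (x : X) (a : A) : bellman P r γ μ B x a ≤ B x a ∧ B x a ≤ optBellman P r γ B x a := by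
  have hle := bellman_le_optBellman r hP hγ hμ B x a
  have hBxa := congrFun (congrFun hB x) a
  constructor <;> nlinarith
    [mul_nonneg hlam0 (sub_nonneg.2 hle), mul_nonneg (sub_nonneg.2 hlam1) (sub_nonneg.2 hle)]

theorem le_optBellman_add_of_sub_le_optBellman [Nonempty A] (hP : IsKernel P) (hγ : 0 ≤ γ)
    {Q e : X → A → ℝ} {η : ℝ} (he : ∀ x a, |e x a| ≤ η)
    (hQe : ∀ x a, (Q - e) x a ≤ optBellman P r γ (Q - e) x a) (x : X) (a : A) :
    Q x a ≤ optBellman P r γ Q x a + (1 + γ) * η := by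
  have hmono := optBellman_mono r hP hγ
    (show Q - e ≤ fun x a => Q x a + η from fun x a => by
      simp only [Pi.sub_apply]; linarith [neg_abs_le (e x a), he x a]) x a
  rw [optBellman_add_const r hP] at hmono
  have := hQe x a
  simp only [Pi.sub_apply] at this
  linarith [le_abs_self (e x a), he x a]

theorem fixedPoint_sub_norm_le_of_mix_fixed [Nonempty X] [Nonempty A] (hP : IsKernel P)
    (hγ0 : 0 ≤ γ) (hγ1 : γ < 1) {μ Qμ Q e : X → A → ℝ} (hμ : IsPolicy μ)
    (hQμ : bellman P r γ μ Qμ = Qμ) {lam : ℝ} (hlam0 : 0 ≤ lam) (hlam1 : lam ≤ 1)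
    (hfix : (fun x a => lam * bellman P r γ μ (Q - e) x a
      + (1 - lam) * optBellman P r γ (Q - e) x a) = Q - e) (x : X) (a : A) :
    Qμ x a - ‖e‖ ≤ Q x a := by
  have hB := bellman_le_and_le_optBellman_of_mix_fixed r hP hγ0 hμ hlam0 hlam1 hfix
  have hQμB := le_add_div_of_le_map_add_of_map_le_add hγ1 (bellman_mono r hP hγ0 hμ)
    (bellman_add_const r hP hμ) (V := Q - e) (c := 0) (c' := 0)
    (fun x a => by rw [hQμ, add_zero]) (fun x a => by linarith [(hB x a).1]) x a
  simp only [Pi.sub_apply, add_zero, zero_div] at hQμB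
  linarith [neg_abs_le (e x a), abs_apply_le_norm e x a]

theorem le_fixedPoint_add_of_mix_fixed [Nonempty X] [Nonempty A] (hP : IsKernel P)
    (hγ0 : 0 ≤ γ) (hγ1 : γ < 1) {μ μ' Qμ' Q e : X → A → ℝ} {δ : X → ℝ} (hμ : IsPolicy μ)
    (hμ' : IsPolicy μ') (hQμ' : bellman P r γ μ' Qμ' = Qμ')
    (hgreedy : ∀ x, (⨆ a, Q x a) - δ x ≤ polQ μ' Q x) {lam : ℝ} (hlam0 : 0 ≤ lam)
    (hlam1 : lam ≤ 1) (hfix : (fun x a => lam * bellman P r γ μ (Q - e) x a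
      + (1 - lam) * optBellman P r γ (Q - e) x a) = Q - e) (x : X) (a : A) :
    Q x a ≤ Qμ' x a + ((1 + γ) / (1 - γ)) * ‖e‖ + (γ / (1 - γ)) * ‖δ‖ := by
  have hB := bellman_le_and_le_optBellman_of_mix_fixed r hP hγ0 hμ hlam0 hlam1 hfix
  have hgreedy' y : (⨆ b, Q y b) ≤ polQ μ' Q y + ‖δ‖ := by
    linarith [hgreedy y, (Real.le_norm_self _).trans (norm_le_pi_norm δ y)]
  have hsub x a : Q x a ≤ bellman P r γ μ' Q x a + (γ * ‖δ‖ + (1 + γ) * ‖e‖) := by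
    linarith [le_optBellman_add_of_sub_le_optBellman r hP hγ0 (abs_apply_le_norm e)
      (fun x a => (hB x a).2) x a, optBellman_le_bellman_add r hP hγ0 hgreedy' x a]
  calc Q x a ≤ _ := le_add_div_of_le_map_add_of_map_le_add hγ1 (bellman_mono r hP hγ0 hμ')
        (bellman_add_const r hP hμ') (c' := 0) hsub (fun x a => by rw [hQμ', add_zero]) x a
    _ = _ := by ring

end Bellman

end RLPQL

theorem double_loop_peng_two_sided_general {X A : Type*} [Fintype X] [Fintype A]
    [Nonempty X] [Nonempty A]
    (P : X → A → X → ℝ) (r : X → A → ℝ) (γ lam : ℝ)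
    (hP : IsKernel P) (hγ0 : 0 ≤ γ) (hγ1 : γ < 1) (hlam0 : 0 ≤ lam) (hlam1 : lam ≤ 1)
    (Qof : (X → A → ℝ) → (X → A → ℝ))
    (hQof : ∀ π : X → A → ℝ, IsPolicy π → bellman P r γ π (Qof π) = Qof π)
    (Qseq μseq : ℕ → X → A → ℝ) (δseq : ℕ → X → ℝ) (ε : ℕ → X → A → ℝ)
    (hμpol : ∀ k, IsPolicy (μseq k))
    (hδgreedy : ∀ k x, (⨆ a, Qseq k x a) - δseq k x ≤ polQ (μseq k) (Qseq k) x)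
    (hfix : ∀ k, (fun x a => lam * bellman P r γ (μseq k) (Qseq (k + 1) - ε k) x a
        + (1 - lam) * optBellman P r γ (Qseq (k + 1) - ε k) x a) = Qseq (k + 1) - ε k) :
    ∀ k : ℕ,
      ((fun x a => Qof (μseq k) x a - ‖ε k‖) ≤ Qseq (k + 1)) ∧
      Qseq (k + 1) ≤ fun x a => Qof (μseq (k + 1)) x a
          + ((1 + γ) / (1 - γ)) * ‖ε k‖ + (γ / (1 - γ)) * ‖δseq (k + 1)‖ := fun k =>
  ⟨fixedPoint_sub_norm_le_of_mix_fixed r hP hγ0 hγ1 (hμpol k) (hQof _ (hμpol k)) hlam0 hlam1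
      (hfix k),
    le_fixedPoint_add_of_mix_fixed r hP hγ0 hγ1 (hμpol k) (hμpol (k + 1))
      (hQof _ (hμpol (k + 1))) (hδgreedy (k + 1)) hlam0 hlam1 (hfix k)⟩

/-- Two-sided bound in the double-loop Peng's Q(λ) analysis: if each
`μ_k` is `δ_k`-greedy w.r.t. `Q_k` and `Q_{k+1} - ε_k` is the unique fixed point of
`λT^{μ_k} + (1-λ)T`, then for every `k`,
`Q^{μ_k} - ‖ε_k‖∞·𝟙 ≤ Q_{k+1} ≤ Q^{μ_{k+1}} + ((1+γ)/(1-γ))‖ε_k‖∞·𝟙 + (γ/(1-γ))‖δ_{k+1}‖∞·𝟙`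
pointwise. `Qof π` denotes the unique fixed point of `T^π`. -/
theorem double_loop_peng_two_sided {X A : Type*} [Fintype X] [Fintype A]
    [Nonempty X] [Nonempty A]
    (P : X → A → X → ℝ) (r : X → A → ℝ) (γ lam : ℝ)
    (hP : IsKernel P) (hγ0 : 0 ≤ γ) (hγ1 : γ < 1) (hlam0 : 0 ≤ lam) (hlam1 : lam ≤ 1)
    (Qof : (X → A → ℝ) → (X → A → ℝ))
    (hQof : ∀ π : X → A → ℝ, IsPolicy π → bellman P r γ π (Qof π) = Qof π)
    (Qseq μseq : ℕ → X → A → ℝ) (δseq : ℕ → X → ℝ) (ε : ℕ → X → A → ℝ)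
    (hμpol : ∀ k, IsPolicy (μseq k))
    (hδ : ∀ k x, 0 ≤ δseq k x)
    (hδgreedy : ∀ k x, (⨆ a, Qseq k x a) - δseq k x ≤ polQ (μseq k) (Qseq k) x)
    (hfix : ∀ k, (fun x a => lam * bellman P r γ (μseq k) (Qseq (k + 1) - ε k) x a
        + (1 - lam) * optBellman P r γ (Qseq (k + 1) - ε k) x a) = Qseq (k + 1) - ε k) :
    ∀ k : ℕ,
      ((fun x a => Qof (μseq k) x a - ‖ε k‖) ≤ Qseq (k + 1)) ∧
      Qseq (k + 1) ≤ fun x a => Qof (μseq (k + 1)) x a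
          + ((1 + γ) / (1 - γ)) * ‖ε k‖ + (γ / (1 - γ)) * ‖δseq (k + 1)‖ :=
  double_loop_peng_two_sided_general P r γ lam hP hγ0 hγ1 hlam0 hlam1 Qof hQof Qseq μseq δseq ε
    hμpol hδgreedy hfix
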